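/- If each f_n commutes with f, each f_n is feeble open and surjective, and Σ_{n=1}^∞ D(f_n, f) < ∞, then (X, f) is weakly mixing if and only if (X, F) is weakly mixing, where (X, F) is weakly mixing means: for all nonempty open sets U₁, U₂, V₁, V₂ there exists n ∈ ℕ with ω_n(U_i) ∩ V_i ≠ ∅ for i = 1, 2. -/

import Mathlib

/-!
Since every `f_j` commutes with `f`, the tail composite `ω_{m,k} = f_{m+k} ∘ ⋯ ∘ f_{m+1}` stays
within `∑_{j > m} D(f_j, f)` of `f^k`, uniformly in `k`, and `ω_{m+k} = ω_{m,k} ∘ ω_m`.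
Hitting times of `f` therefore transfer to `F` once `U` is replaced by the interior of `ω_m(U)`
(feeble openness), and hitting times `n > m` of `F` transfer to `f` once `U` is replaced by
`ω_m⁻¹(U)` (surjectivity). Such large hitting times exist because a weakly mixing system on a
nontrivial Hausdorff space has no isolated points.
-/

open Filter Metric Set

noncomputable def supD {X : Type*} [MetricSpace X] (g h : X → X) : ℝ :=
  ⨆ x, dist (g x) (h x)

def omega {X : Type*} (fn : ℕ → X → X) : ℕ → X → X
  | 0 => id
  | k + 1 => fn (k + 1) ∘ omega fn k

def omegaSeg {X : Type*} (fn : ℕ → X → X) (n : ℕ) : ℕ → X → X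
  | 0 => id
  | k + 1 => fn (n + k + 1) ∘ omegaSeg fn n k

open Topology

/-- `g n` is the time-`n` map of the system: `f^[n]` for `(X, f)`, `omega fn n` for `(X, F)`. -/
def IsWeakMixing {X : Type*} [TopologicalSpace X] (g : ℕ → X → X) : Prop :=
  ∀ U₁ U₂ V₁ V₂ : Set X, IsOpen U₁ → IsOpen U₂ → IsOpen V₁ → IsOpen V₂ →
    U₁.Nonempty → U₂.Nonempty → V₁.Nonempty → V₂.Nonempty →
    ∃ n : ℕ, 1 ≤ n ∧ (g n '' U₁ ∩ V₁).Nonempty ∧ (g n '' U₂ ∩ V₂).Nonempty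

def IsFeeblyOpen {X : Type*} [TopologicalSpace X] (g : X → X) : Prop :=
  ∀ U : Set X, IsOpen U → U.Nonempty → (interior (g '' U)).Nonempty

section Topological

variable {X : Type*} [TopologicalSpace X]

theorem isFeeblyOpen_id : IsFeeblyOpen (id : X → X) := fun U hU hne => by
  rwa [image_id, hU.interior_eq]

theorem IsFeeblyOpen.comp {g h : X → X} (hg : IsFeeblyOpen g) (hh : IsFeeblyOpen h) :
    IsFeeblyOpen (g ∘ h) := fun U hU hne =>
  (hg _ isOpen_interior (hh U hU hne)).mono <| by
    rw [image_comp]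
    exact interior_mono (image_mono interior_subset)

theorem IsWeakMixing.not_isOpen_singleton [T1Space X] [Nontrivial X] {g : ℕ → X → X}
    (h : IsWeakMixing g) (y : X) : ¬IsOpen {y} := by
  intro hy
  obtain ⟨z, hz⟩ := exists_ne y
  obtain ⟨n, -, ⟨_, ⟨_, rfl, rfl⟩, h₁⟩, ⟨_, ⟨_, rfl, rfl⟩, h₂⟩⟩ :=
    h {y} {y} {y} {y}ᶜ hy hy hy isOpen_compl_singleton (singleton_nonempty y)
      (singleton_nonempty y) (singleton_nonempty y) ⟨z, hz⟩
  exact h₂ h₁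

theorem IsWeakMixing.exists_gt [T2Space X] {g : ℕ → X → X} (hg : ∀ n, Continuous (g n))
    (h : IsWeakMixing g) (m : ℕ) {U₁ U₂ V₁ V₂ : Set X} (hU₁ : IsOpen U₁) (hU₂ : IsOpen U₂)
    (hV₁ : IsOpen V₁) (hV₂ : IsOpen V₂) (hU₁ne : U₁.Nonempty) (hU₂ne : U₂.Nonempty)
    (hV₁ne : V₁.Nonempty) (hV₂ne : V₂.Nonempty) :
    ∃ n, m < n ∧ (g n '' U₁ ∩ V₁).Nonempty ∧ (g n '' U₂ ∩ V₂).Nonempty := by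
  rcases subsingleton_or_nontrivial X with hX | hX
  · refine ⟨m + 1, m.lt_succ_self, ?_, ?_⟩
    · simpa [hV₁ne.eq_univ] using hU₁ne.image (g (m + 1))
    · simpa [hV₂ne.eq_univ] using hU₂ne.image (g (m + 1))
  have : ∀ x : X, NeBot (𝓝[≠] x) := fun x =>
    ⟨mt (isOpen_singleton_iff_punctured_nhds x).2 (h.not_isOpen_singleton x)⟩
  -- Aim `V₁` at a point `x` off the first `m + 1` iterates of some `a ∈ U₁`, and shrink `U₁`
  -- around `a` so that none of these iterates can reach `V₁`.
  obtain ⟨a, ha⟩ := hU₁ne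
  have hE : ((fun n => g n a) '' Iic m).Finite := (finite_Iic m).image _
  obtain ⟨x, hxV, -, hxE⟩ := (dense_univ.sdiff_finite hE).inter_open_nonempty V₁ hV₁ hV₁ne
  obtain ⟨O, P, hO, hP, hEO, hxP, hOP⟩ := SeparatedNhds.of_isCompact_isCompact hE.isCompact
    isCompact_singleton (disjoint_singleton_right.2 hxE)
  have hA : IsOpen (U₁ ∩ ⋂ n ∈ Iic m, g n ⁻¹' O) :=
    hU₁.inter ((finite_Iic m).isOpen_biInter fun n _ => hO.preimage (hg n))
  have haA : a ∈ U₁ ∩ ⋂ n ∈ Iic m, g n ⁻¹' O :=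
    ⟨ha, mem_iInter₂.2 fun n hn => hEO (mem_image_of_mem _ hn)⟩
  obtain ⟨n, -, h₁, h₂⟩ := h _ U₂ (V₁ ∩ P) V₂ hA hU₂ (hV₁.inter hP) hV₂ ⟨a, haA⟩ hU₂ne
    ⟨x, hxV, hxP rfl⟩ hV₂ne
  refine ⟨n, ?_, h₁.mono (inter_subset_inter (image_mono inter_subset_left) inter_subset_left), h₂⟩
  by_contra! hnm
  obtain ⟨_, ⟨z, hz, rfl⟩, -, hzP⟩ := h₁
  exact disjoint_left.1 hOP (mem_iInter₂.1 hz.2 n hnm) hzP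

end Topological

section Metric

variable {X : Type*} [MetricSpace X]

theorem IsWeakMixing.of_ball {g : ℕ → X → X}
    (h : ∀ U₁ U₂ : Set X, IsOpen U₁ → IsOpen U₂ → U₁.Nonempty → U₂.Nonempty →
      ∀ (y₁ y₂ : X) (ε : ℝ), 0 < ε →
        ∃ n, 1 ≤ n ∧ (g n '' U₁ ∩ ball y₁ ε).Nonempty ∧ (g n '' U₂ ∩ ball y₂ ε).Nonempty) :
    IsWeakMixing g := by
  intro U₁ U₂ V₁ V₂ hU₁ hU₂ hV₁ hV₂ hU₁ne hU₂ne ⟨y₁, hy₁⟩ ⟨y₂, hy₂⟩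
  obtain ⟨r₁, hr₁, hb₁⟩ := isOpen_iff.1 hV₁ y₁ hy₁
  obtain ⟨r₂, hr₂, hb₂⟩ := isOpen_iff.1 hV₂ y₂ hy₂
  obtain ⟨n, hn, h₁, h₂⟩ := h U₁ U₂ hU₁ hU₂ hU₁ne hU₂ne y₁ y₂ _ (lt_min hr₁ hr₂)
  exact ⟨n, hn,
    h₁.mono (inter_subset_inter_right _ ((ball_subset_ball (min_le_left _ _)).trans hb₁)),
    h₂.mono (inter_subset_inter_right _ ((ball_subset_ball (min_le_right _ _)).trans hb₂))⟩

theorem Set.Nonempty.image_inter_ball_of_dist_lt {α : Type*} {g h : α → X} {A : Set α} {y : X} {ε δ : ℝ}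
    (hA : (g '' A ∩ ball y ε).Nonempty) (hgh : ∀ x, dist (h x) (g x) < δ) :
    (h '' A ∩ ball y (ε + δ)).Nonempty := by
  obtain ⟨_, ⟨x, hx, rfl⟩, hxy⟩ := hA
  refine ⟨h x, mem_image_of_mem h hx, ?_⟩
  calc dist (h x) y ≤ dist (h x) (g x) + dist (g x) y := dist_triangle _ _ _
    _ < ε + δ := by linarith [hgh x, mem_ball.1 hxy]

theorem supD_nonneg (g h : X → X) : 0 ≤ supD g h :=
  Real.iSup_nonneg fun _ => dist_nonneg

variable [CompactSpace X]

theorem dist_le_supD {g h : X → X} (hg : Continuous g) (hh : Continuous h) (x : X) :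
    dist (g x) (h x) ≤ supD g h :=
  le_ciSup (isCompact_range (hg.dist hh)).bddAbove x

end Metric

section Omega

variable {X : Type*} {fn : ℕ → X → X}

theorem omega_add (m : ℕ) :
    ∀ k, omega fn (m + k) = omegaSeg fn m k ∘ omega fn m
  | 0 => rfl
  | k + 1 => by
    change fn (m + k + 1) ∘ omega fn (m + k) = _
    rw [omega_add m k]
    rfl

theorem commute_omegaSeg {f : X → X} (hcomm : ∀ n, fn n ∘ f = f ∘ fn n) (m : ℕ) :
    ∀ k, Function.Commute (omegaSeg fn m k) f
  | 0 => Function.Commute.id_left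
  | k + 1 => Function.Commute.comp_left (congrFun (hcomm (m + k + 1))) (commute_omegaSeg hcomm m k)

theorem omega_surjective (hsurj : ∀ n, Function.Surjective (fn n)) :
    ∀ n, Function.Surjective (omega fn n)
  | 0 => Function.surjective_id
  | k + 1 => (hsurj (k + 1)).comp (omega_surjective hsurj k)

variable [TopologicalSpace X]

theorem continuous_omega (hfn : ∀ n, Continuous (fn n)) : ∀ n, Continuous (omega fn n)
  | 0 => continuous_id
  | k + 1 => (hfn (k + 1)).comp (continuous_omega hfn k)

theorem isFeeblyOpen_omega (hfo : ∀ n, IsFeeblyOpen (fn n)) : ∀ n, IsFeeblyOpen (omega fn n)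
  | 0 => isFeeblyOpen_id
  | k + 1 => (hfo (k + 1)).comp (isFeeblyOpen_omega hfo k)

end Omega

section Approximation

variable {X : Type*} [MetricSpace X] [CompactSpace X] {fn : ℕ → X → X} {f : X → X}

theorem dist_omegaSeg_iterate_le (hf : Continuous f) (hfn : ∀ n, Continuous (fn n))
    (hcomm : ∀ n, fn n ∘ f = f ∘ fn n) (m : ℕ) :
    ∀ (k : ℕ) (x : X),
      dist (omegaSeg fn m k x) (f^[k] x) ≤ ∑ j ∈ Finset.range k, supD (fn (m + j + 1)) f
  | 0, x => by simp [omegaSeg]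
  | k + 1, x => by
    -- Peel off the last map on the left but the first `f` on the right, using `f ∘ ω = ω ∘ f`.
    calc dist (fn (m + k + 1) (omegaSeg fn m k x)) (f^[k] (f x))
        ≤ dist (fn (m + k + 1) (omegaSeg fn m k x)) (f (omegaSeg fn m k x))
          + dist (omegaSeg fn m k (f x)) (f^[k] (f x)) := by
          rw [← commute_omegaSeg hcomm m k x]; exact dist_triangle _ _ _
      _ ≤ supD (fn (m + k + 1)) f + ∑ j ∈ Finset.range k, supD (fn (m + j + 1)) f :=
          add_le_add (dist_le_supD (hfn _) hf _) (dist_omegaSeg_iterate_le hf hfn hcomm m k _)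
      _ = ∑ j ∈ Finset.range (k + 1), supD (fn (m + j + 1)) f := by
          rw [Finset.sum_range_succ, add_comm]

theorem exists_dist_omegaSeg_iterate_lt (hf : Continuous f) (hfn : ∀ n, Continuous (fn n))
    (hcomm : ∀ n, fn n ∘ f = f ∘ fn n) (hsum : Summable fun n => supD (fn (n + 1)) f)
    {ε : ℝ} (hε : 0 < ε) : ∃ m, ∀ k x, dist (omegaSeg fn m k x) (f^[k] x) < ε := by
  obtain ⟨m, hm⟩ := ((tendsto_order.1 (tendsto_sum_nat_add fun n => supD (fn (n + 1)) f)).2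
    ε hε).exists
  refine ⟨m, fun k x => (dist_omegaSeg_iterate_le hf hfn hcomm m k x).trans_lt
    (lt_of_le_of_lt ?_ hm)⟩
  simp_rw [add_comm m]
  exact ((summable_nat_add_iff m).2 hsum).sum_le_tsum _ fun j _ => supD_nonneg _ _

end Approximation

section WeakMixing

variable {X : Type*} [MetricSpace X] [CompactSpace X] {fn : ℕ → X → X} {f : X → X}

theorem isWeakMixing_omega_of_iterate (hf : Continuous f) (hfn : ∀ n, Continuous (fn n))
    (hfo : ∀ n, IsFeeblyOpen (fn n)) (hcomm : ∀ n, fn n ∘ f = f ∘ fn n)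
    (hsum : Summable fun n => supD (fn (n + 1)) f) (h : IsWeakMixing fun n => f^[n]) :
    IsWeakMixing (omega fn) := by
  refine IsWeakMixing.of_ball fun U₁ U₂ hU₁ hU₂ hU₁ne hU₂ne y₁ y₂ ε hε => ?_
  obtain ⟨m, hm⟩ := exists_dist_omegaSeg_iterate_lt hf hfn hcomm hsum (half_pos hε)
  obtain ⟨k, hk, h₁, h₂⟩ := h _ _ (ball y₁ (ε / 2)) (ball y₂ (ε / 2)) isOpen_interior
    isOpen_interior isOpen_ball isOpen_ball (isFeeblyOpen_omega hfo m U₁ hU₁ hU₁ne)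
    (isFeeblyOpen_omega hfo m U₂ hU₂ hU₂ne) (nonempty_ball.2 (half_pos hε))
    (nonempty_ball.2 (half_pos hε))
  have hsub (U : Set X) :
      omegaSeg fn m k '' interior (omega fn m '' U) ⊆ omega fn (m + k) '' U := by
    rw [omega_add, image_comp]
    exact image_mono interior_subset
  refine ⟨m + k, by omega, ?_, ?_⟩
  · simpa only [add_halves] using
      (h₁.image_inter_ball_of_dist_lt (hm k)).mono (inter_subset_inter_left _ (hsub U₁))
  · simpa only [add_halves] using
      (h₂.image_inter_ball_of_dist_lt (hm k)).mono (inter_subset_inter_left _ (hsub U₂))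

theorem isWeakMixing_iterate_of_omega (hf : Continuous f) (hfn : ∀ n, Continuous (fn n))
    (hsurj : ∀ n, Function.Surjective (fn n)) (hcomm : ∀ n, fn n ∘ f = f ∘ fn n)
    (hsum : Summable fun n => supD (fn (n + 1)) f) (h : IsWeakMixing (omega fn)) :
    IsWeakMixing fun n => f^[n] := by
  refine IsWeakMixing.of_ball fun U₁ U₂ hU₁ hU₂ hU₁ne hU₂ne y₁ y₂ ε hε => ?_
  obtain ⟨m, hm⟩ := exists_dist_omegaSeg_iterate_lt hf hfn hcomm hsum (half_pos hε)
  obtain ⟨n, hmn, h₁, h₂⟩ := h.exists_gt (continuous_omega hfn) m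
    (hU₁.preimage (continuous_omega hfn m)) (hU₂.preimage (continuous_omega hfn m))
    isOpen_ball isOpen_ball (hU₁ne.preimage (omega_surjective hsurj m))
    (hU₂ne.preimage (omega_surjective hsurj m)) (nonempty_ball.2 (half_pos hε))
    (nonempty_ball.2 (half_pos hε))
  obtain ⟨k, rfl⟩ : ∃ k, n = m + k := ⟨n - m, by omega⟩
  have hsub (U : Set X) : omega fn (m + k) '' (omega fn m ⁻¹' U) ⊆ omegaSeg fn m k '' U := by
    rw [omega_add, image_comp]
    exact image_mono (image_preimage_subset _ _)
  have hm' (x : X) : dist (f^[k] x) (omegaSeg fn m k x) < ε / 2 := dist_comm (f^[k] x) _ ▸ hm k x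
  refine ⟨k, by omega, ?_, ?_⟩
  · simpa only [add_halves] using
      (h₁.mono (inter_subset_inter_left _ (hsub U₁))).image_inter_ball_of_dist_lt hm'
  · simpa only [add_halves] using
      (h₂.mono (inter_subset_inter_left _ (hsub U₂))).image_inter_ball_of_dist_lt hm'

end WeakMixing

theorem stmt11_general {X : Type*} [MetricSpace X] [CompactSpace X]
    (f : X → X) (fn : ℕ → X → X)
    (hf : Continuous f)
    (hfn : ∀ n, Continuous (fn n))
    (hsurj : ∀ n, Function.Surjective (fn n))
    (hfo : ∀ n, ∀ U : Set X, IsOpen U → U.Nonempty → (interior (fn n '' U)).Nonempty)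
    (hcomm : ∀ n, fn n ∘ f = f ∘ fn n)
    (hsum : Summable fun n => supD (fn (n + 1)) f) :
    (∀ U₁ U₂ V₁ V₂ : Set X, IsOpen U₁ → IsOpen U₂ → IsOpen V₁ → IsOpen V₂ →
        U₁.Nonempty → U₂.Nonempty → V₁.Nonempty → V₂.Nonempty →
        ∃ n : ℕ, 1 ≤ n ∧ (f^[n] '' U₁ ∩ V₁).Nonempty ∧ (f^[n] '' U₂ ∩ V₂).Nonempty) ↔
    (∀ U₁ U₂ V₁ V₂ : Set X, IsOpen U₁ → IsOpen U₂ → IsOpen V₁ → IsOpen V₂ →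
        U₁.Nonempty → U₂.Nonempty → V₁.Nonempty → V₂.Nonempty →
        ∃ n : ℕ, 1 ≤ n ∧ (omega fn n '' U₁ ∩ V₁).Nonempty ∧
          (omega fn n '' U₂ ∩ V₂).Nonempty) :=
  ⟨isWeakMixing_omega_of_iterate hf hfn hfo hcomm hsum,
    isWeakMixing_iterate_of_omega hf hfn hsurj hcomm hsum⟩

theorem stmt11 {X : Type*} [MetricSpace X] [CompactSpace X] [Nonempty X]
    (f : X → X) (fn : ℕ → X → X)
    (hf : Continuous f) (hfsurj : Function.Surjective f)
    (hfn : ∀ n, Continuous (fn n))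
    (hsurj : ∀ n, Function.Surjective (fn n))
    (hfo : ∀ n, ∀ U : Set X, IsOpen U → U.Nonempty → (interior (fn n '' U)).Nonempty)
    (hcomm : ∀ n, fn n ∘ f = f ∘ fn n)
    (hsum : Summable fun n => supD (fn (n + 1)) f) :
    (∀ U₁ U₂ V₁ V₂ : Set X, IsOpen U₁ → IsOpen U₂ → IsOpen V₁ → IsOpen V₂ →
        U₁.Nonempty → U₂.Nonempty → V₁.Nonempty → V₂.Nonempty →
        ∃ n : ℕ, 1 ≤ n ∧ (f^[n] '' U₁ ∩ V₁).Nonempty ∧ (f^[n] '' U₂ ∩ V₂).Nonempty) ↔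
    (∀ U₁ U₂ V₁ V₂ : Set X, IsOpen U₁ → IsOpen U₂ → IsOpen V₁ → IsOpen V₂ →
        U₁.Nonempty → U₂.Nonempty → V₁.Nonempty → V₂.Nonempty →
        ∃ n : ℕ, 1 ≤ n ∧ (omega fn n '' U₁ ∩ V₁).Nonempty ∧
          (omega fn n '' U₂ ∩ V₂).Nonempty) :=
  stmt11_general f fn hf hfn hsurj hfo hcomm hsum
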